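/- Let (Ω, 𝒢) be a measurable space, p* a probability measure on Ω, Y : Ω → ℝ^d a measurable map, and V : Ω × ℝ → EReal jointly measurable with V(ω, ·) nondecreasing for every ω. Let γ ∈ (0,1] and let C : Ω → [0,∞] be measurable with c* := ∫⁻ C dp* < ∞, and assume that for every ω with C(ω) < ∞, every real λ ≥ 1 and every x ∈ ℝ one has V(ω, λ·x) ≤ λ^γ·(V(ω, x) + C(ω)) in EReal. Set l* := Σ_{θ ∈ {−1,1}^d} ∫⁻ (V(ω, 1 + ⟨θ, Y(ω)⟩))⁺ dp*(ω) ∈ [0,∞]. Then for every x ∈ ℝ and every h ∈ ℝ^d: ∫⁻ (V(ω, x + ⟨h, Y(ω)⟩))⁺ dp*(ω) ≤ (max(|h|, max(x,0), 1))^γ · (l* + c*), the right-hand side being computed in [0,∞]. -/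

import Mathlib

/-!
With `θ` the sign vector of `Y ω` we have `⟨θ, Y ω⟩ = ∑ i, |Y ω i|`, hence
`x + ⟨h, Y ω⟩ ≤ L * (1 + ⟨θ, Y ω⟩)` for `L = max(|h|, x⁺, 1)`. Monotonicity of `V ω` and the
growth bound at `λ = L` give `V(ω, x + ⟨h, Y ω⟩)⁺ ≤ L^γ (V(ω, 1 + ⟨θ, Y ω⟩)⁺ + C ω)` pointwise
(trivially where `C ω = ⊤`); bound the `θ`-term by the sum over all sign vectors and integrate.
-/

open MeasureTheory
open scoped ENNReal

/-- The `[0,∞]`-valued positive part `a⁺ = max(a,0)` of `a : EReal`. -/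
noncomputable def ePos (a : EReal) : ℝ≥0∞ := (max a 0).abs

/-- The sign vector of `ℝ^d` associated with `s : Fin d → Bool` (coordinates `±1`). -/
noncomputable def signVec {d : ℕ} (s : Fin d → Bool) : EuclideanSpace ℝ (Fin d) :=
  WithLp.toLp 2 (fun i => if s i then (1 : ℝ) else -1)

theorem ePos_eq_toENNReal : ePos = EReal.toENNReal := by
  ext a
  induction a with
  | bot => simp [ePos]
  | coe a =>
    rcases le_total a 0 with ha | ha
    · simp [ePos, ha, EReal.coe_nonpos.2 ha]
    · simp [ePos, ha, EReal.abs_def, abs_of_nonneg ha]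
  | top => simp [ePos]

section SignVectors

variable {d : ℕ}

theorem inner_le_norm_mul_sum_abs (h y : EuclideanSpace ℝ (Fin d)) :
    inner ℝ h y ≤ ‖h‖ * ∑ i, |y i| := by
  rw [PiLp.inner_apply, Finset.mul_sum]
  refine Finset.sum_le_sum fun i _ => ?_
  calc inner ℝ (h i) (y i) ≤ ‖h i‖ * ‖y i‖ := real_inner_le_norm _ _
    _ ≤ ‖h‖ * |y i| := by
      gcongr
      · exact PiLp.norm_apply_le h i
      · exact (Real.norm_eq_abs _).le

theorem inner_signVec_decide_nonneg (y : EuclideanSpace ℝ (Fin d)) :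
    inner ℝ (signVec fun i => decide (0 ≤ y i)) y = ∑ i, |y i| := by
  rw [PiLp.inner_apply]
  refine Finset.sum_congr rfl fun i _ => ?_
  by_cases hi : 0 ≤ y i
  · simp [signVec, hi, abs_of_nonneg hi]
  · simp [signVec, hi, abs_of_neg (not_le.1 hi)]

theorem add_inner_le_mul_one_add_sum_abs {x L : ℝ} {h : EuclideanSpace ℝ (Fin d)}
    (hx : x ≤ L) (hh : ‖h‖ ≤ L) (y : EuclideanSpace ℝ (Fin d)) :
    x + inner ℝ h y ≤ L * (1 + ∑ i, |y i|) := by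
  have hsum : 0 ≤ ∑ i, |y i| := by positivity
  nlinarith [inner_le_norm_mul_sum_abs h y]

end SignVectors

theorem toENNReal_le_ofReal_rpow_mul_of_growth {f : ℝ → EReal} (hf : Monotone f) {γ : ℝ}
    {c : ℝ≥0∞}
    (hgrow : c < ⊤ → ∀ lam : ℝ, 1 ≤ lam → ∀ x : ℝ,
      f (lam * x) ≤ ((lam ^ γ : ℝ) : EReal) * (f x + (c : EReal)))
    {L u y : ℝ} (hL : 1 ≤ L) (hy : y ≤ L * u) :
    (f y).toENNReal ≤ ENNReal.ofReal (L ^ γ) * ((f u).toENNReal + c) := by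
  rcases eq_top_or_lt_top c with rfl | hc
  · have hLγ : 0 < L ^ γ := Real.rpow_pos_of_pos (zero_lt_one.trans_le hL) γ
    simp [ENNReal.mul_top, hLγ]
  calc (f y).toENNReal
      ≤ (((L ^ γ : ℝ) : EReal) * (f u + (c : EReal))).toENNReal :=
        EReal.toENNReal_le_toENNReal ((hf hy).trans (hgrow hc L hL u))
    _ = ENNReal.ofReal (L ^ γ) * (f u + (c : EReal)).toENNReal := by
        rw [EReal.toENNReal_mul (EReal.coe_nonneg.2 (by positivity)), EReal.real_coe_toENNReal]
    _ ≤ ENNReal.ofReal (L ^ γ) * ((f u).toENNReal + c) := by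
        gcongr
        exact EReal.toENNReal_add_le.trans_eq (by rw [EReal.toENNReal_coe])

theorem pos_part_lintegral_bound_general {Ω : Type*} [MeasurableSpace Ω] {d : ℕ}
    (p : Measure Ω)
    (Y : Ω → EuclideanSpace ℝ (Fin d)) (hY : Measurable Y)
    (V : Ω → ℝ → EReal) (hVmeas : Measurable (Function.uncurry V))
    (hVmono : ∀ ω, Monotone (V ω))
    (γ : ℝ)
    (C : Ω → ℝ≥0∞)
    (hgrow : ∀ ω, C ω < ⊤ → ∀ lam : ℝ, 1 ≤ lam → ∀ x : ℝ,
      V ω (lam * x) ≤ ((lam ^ γ : ℝ) : EReal) * (V ω x + (C ω : EReal))) :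
    ∀ x : ℝ, ∀ h : EuclideanSpace ℝ (Fin d),
      (∫⁻ ω, ePos (V ω (x + (inner ℝ h (Y ω) : ℝ))) ∂p)
        ≤ ENNReal.ofReal ((max (max ‖h‖ (max x 0)) 1) ^ γ)
          * ((∑ s : Fin d → Bool, ∫⁻ ω, ePos (V ω (1 + (inner ℝ (signVec s) (Y ω) : ℝ))) ∂p)
            + ∫⁻ ω, C ω ∂p) := by
  intro x h
  rw [ePos_eq_toENNReal]
  set L := max (max ‖h‖ (max x 0)) 1
  set F := fun (s : Fin d → Bool) ω => (V ω (1 + inner ℝ (signVec s) (Y ω))).toENNReal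
  have hF : ∀ s, Measurable (F s) := fun s =>
    (hVmeas.comp (measurable_id.prodMk (by fun_prop))).ereal_toENNReal
  have hpointwise : ∀ ω, (V ω (x + inner ℝ h (Y ω))).toENNReal
      ≤ ENNReal.ofReal (L ^ γ) * (∑ s, F s ω + C ω) := by
    intro ω
    have hxL : x ≤ L := (le_max_left x 0).trans ((le_max_right _ _).trans (le_max_left _ _))
    have hhL : ‖h‖ ≤ L := (le_max_left _ _).trans (le_max_left _ _)
    refine (toENNReal_le_ofReal_rpow_mul_of_growth (hVmono ω) (hgrow ω) (le_max_right _ _)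
      (add_inner_le_mul_one_add_sum_abs hxL hhL (Y ω))).trans ?_
    rw [← inner_signVec_decide_nonneg]
    gcongr
    exact Finset.single_le_sum (f := fun s => F s ω) (fun _ _ => zero_le) (Finset.mem_univ _)
  calc ∫⁻ ω, (V ω (x + inner ℝ h (Y ω))).toENNReal ∂p
      ≤ ∫⁻ ω, ENNReal.ofReal (L ^ γ) * (∑ s, F s ω + C ω) ∂p := lintegral_mono hpointwise
    _ = ENNReal.ofReal (L ^ γ) * ((∑ s, ∫⁻ ω, F s ω ∂p) + ∫⁻ ω, C ω ∂p) := by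
      rw [lintegral_const_mul' _ _ ENNReal.ofReal_ne_top,
        lintegral_add_left (Finset.measurable_sum _ fun s _ => hF s),
        lintegral_finsetSum _ fun s _ => hF s]

/-- Under the one-sided elasticity bound
`V(ω, λ·x) ≤ λ^γ·(V(ω,x) + C(ω))` (γ ∈ (0,1], `c* := ∫⁻ C dp* < ∞`), setting
`l* := Σ_{θ ∈ {−1,1}^d} ∫⁻ (V(ω, 1 + ⟨θ, Y ω⟩))⁺ dp*`, one has for all `x ∈ ℝ`, `h ∈ ℝ^d`:
`∫⁻ (V(ω, x + ⟨h, Y ω⟩))⁺ dp* ≤ (max(|h|, x⁺, 1))^γ · (l* + c*)`. -/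
theorem pos_part_lintegral_bound {Ω : Type*} [MeasurableSpace Ω] {d : ℕ}
    (p : Measure Ω) [IsProbabilityMeasure p]
    (Y : Ω → EuclideanSpace ℝ (Fin d)) (hY : Measurable Y)
    (V : Ω → ℝ → EReal) (hVmeas : Measurable (Function.uncurry V))
    (hVmono : ∀ ω, Monotone (V ω))
    (γ : ℝ) (hγ0 : 0 < γ) (hγ1 : γ ≤ 1)
    (C : Ω → ℝ≥0∞) (hCmeas : Measurable C) (hCfin : (∫⁻ ω, C ω ∂p) < ⊤)
    (hgrow : ∀ ω, C ω < ⊤ → ∀ lam : ℝ, 1 ≤ lam → ∀ x : ℝ,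
      V ω (lam * x) ≤ ((lam ^ γ : ℝ) : EReal) * (V ω x + (C ω : EReal))) :
    ∀ x : ℝ, ∀ h : EuclideanSpace ℝ (Fin d),
      (∫⁻ ω, ePos (V ω (x + (inner ℝ h (Y ω) : ℝ))) ∂p)
        ≤ ENNReal.ofReal ((max (max ‖h‖ (max x 0)) 1) ^ γ)
          * ((∑ s : Fin d → Bool, ∫⁻ ω, ePos (V ω (1 + (inner ℝ (signVec s) (Y ω) : ℝ))) ∂p)
            + ∫⁻ ω, C ω ∂p) :=
  pos_part_lintegral_bound_general p Y hY V hVmeas hVmono γ C hgrow
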